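/- arXiv:2209.10982 — 6 statements merged into one kernel-verified Lean document; each statement's English description precedes it below -/
import Mathlib

section
/- Let d ≥ 2, let U ⊆ ℝ^d be an open connected set, and let f : U → ℝ^d be twice continuously differentiable with ε(f)(y) = 0 for every y ∈ U, where ε(f) = (Df + Dfᵀ)/2 is the symmetric gradient. Then there exist a skew-symmetric matrix A ∈ ℝ^{d×d} (Aᵀ = −A) and a vector b ∈ ℝ^d such that f(y) = A y + b for all y ∈ U. In other words, the kernel of the symmetric gradient consists exactly of the rigid velocities r(y) = Ay + b with A skew-symmetric. -/
/-!
Differentiating `ε(f) = 0` shows that every `∂ₖ Df` is skew, while `∂ₖ ∂ᵢ f = ∂ᵢ ∂ₖ f`; a tensor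
symmetric in its first two slots and skew in its last two vanishes, so `D²f = 0`. On a connected
open set `Df` is then a constant `M`, and `f - M` a constant `b`; `M` is skew because `ε(f) = 0`.
-/

open Matrix Filter Topology

theorem eq_zero_of_symm_of_antisymm {ι M : Type*} [AddCommGroup M] [IsAddTorsionFree M]
    {T : ι → ι → ι → M} (hsymm : ∀ a b c, T a b c = T b a c)
    (hanti : ∀ a b c, T a b c = -T a c b) : T = 0 := by
  funext a b c
  refine self_eq_neg.mp ?_
  calc T a b c = -T a c b := hanti a b c
    _ = -T c a b := by rw [hsymm]
    _ = T c b a := by rw [hanti c a b, neg_neg]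
    _ = T b c a := hsymm c b a
    _ = -T b a c := hanti b c a
    _ = -T a b c := by rw [hsymm]

theorem ContinuousLinearMap.comp_fderiv_eq_zero_of_eventuallyEq_const {𝕜 E F G : Type*}
    [NontriviallyNormedField 𝕜] [NormedAddCommGroup E] [NormedSpace 𝕜 E]
    [NormedAddCommGroup F] [NormedSpace 𝕜 F] [NormedAddCommGroup G] [NormedSpace 𝕜 G]
    {g : E → F} {y : E} {c : G} (L : F →L[𝕜] G) (hg : DifferentiableAt 𝕜 g y)
    (hc : (fun z => L (g z)) =ᶠ[𝓝 y] fun _ => c) : L.comp (fderiv 𝕜 g y) = 0 := by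
  rw [← (L.hasFDerivAt.comp y hg.hasFDerivAt).fderiv]
  exact hc.fderiv_eq.trans (fderiv_const_apply c)

section SymmetricGradient

variable {ι : Type*} [Fintype ι] [DecidableEq ι]

theorem ContinuousLinearMap.eq_zero_of_apply_single {F : Type*} [NormedAddCommGroup F]
    [NormedSpace ℝ F] {A : (ι → ℝ) →L[ℝ] F} (h : ∀ i, A (Pi.single i 1) = 0) : A = 0 :=
  ContinuousLinearMap.coe_injective <| (Pi.basisFun ℝ ι).ext fun i => by simpa using h i

/-- `2 ε(·)ᵢⱼ`, as a functional on derivatives. -/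
noncomputable def symmGradEntry (i j : ι) : ((ι → ℝ) →L[ℝ] (ι → ℝ)) →L[ℝ] ℝ :=
  (ContinuousLinearMap.proj (φ := fun _ : ι => ℝ) j).comp
      (ContinuousLinearMap.apply ℝ (ι → ℝ) (Pi.single i 1)) +
    (ContinuousLinearMap.proj (φ := fun _ : ι => ℝ) i).comp
      (ContinuousLinearMap.apply ℝ (ι → ℝ) (Pi.single j 1))

@[simp]
theorem symmGradEntry_apply (i j : ι) (A : (ι → ℝ) →L[ℝ] (ι → ℝ)) :
    symmGradEntry i j A = A (Pi.single i 1) j + A (Pi.single j 1) i :=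
  rfl

theorem fderiv_fderiv_eq_zero_of_symmGrad_eq_zero {f : (ι → ℝ) → (ι → ℝ)} {y : ι → ℝ}
    (hf : ContDiffAt ℝ 2 f y)
    (hsym : ∀ᶠ z in 𝓝 y, ∀ i j, symmGradEntry i j (fderiv ℝ f z) = 0) :
    fderiv ℝ (fderiv ℝ f) y = 0 := by
  have hD : DifferentiableAt ℝ (fderiv ℝ f) y :=
    (hf.fderiv_right (m := 1) le_rfl).differentiableAt one_ne_zero
  have hS : IsSymmSndFDerivAt ℝ f y :=
    hf.isSymmSndFDerivAt (by simp [minSmoothness_of_isRCLikeNormedField])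
  set B := fderiv ℝ (fderiv ℝ f) y
  have hskew : ∀ i j k, symmGradEntry i j (B (Pi.single k 1)) = 0 := fun i j k => by
    have := (symmGradEntry i j).comp_fderiv_eq_zero_of_eventuallyEq_const hD
      (hsym.mono fun z hz => hz i j)
    exact congrArg (· (Pi.single k 1)) this
  have hT := eq_zero_of_symm_of_antisymm (T := fun k i j => B (Pi.single k 1) (Pi.single i 1) j)
    (fun k i j => by rw [hS.eq])
    (fun k i j => eq_neg_of_add_eq_zero_left (hskew i j k))
  refine ContinuousLinearMap.eq_zero_of_apply_single fun k =>
    ContinuousLinearMap.eq_zero_of_apply_single fun i => funext fun j => ?_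
  exact congrFun (congrFun (congrFun hT k) i) j

end SymmetricGradient

theorem statement_0_general {d : ℕ} (U : Set (Fin d → ℝ))
    (hU : IsOpen U) (hconn : IsConnected U)
    (f : (Fin d → ℝ) → (Fin d → ℝ)) (hf : ContDiffOn ℝ 2 f U)
    (hsym : ∀ y ∈ U, ∀ i j : Fin d,
      fderiv ℝ f y (Pi.single i 1) j + fderiv ℝ f y (Pi.single j 1) i = 0) :
    ∃ A : Matrix (Fin d) (Fin d) ℝ, Aᵀ = -A ∧
      ∃ b : Fin d → ℝ, ∀ y ∈ U, f y = A.mulVec y + b := by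
  obtain ⟨y₀, hy₀⟩ := hconn.nonempty
  have hD2 : Set.EqOn (fderiv ℝ (fderiv ℝ f)) 0 U := fun y hy =>
    fderiv_fderiv_eq_zero_of_symmGrad_eq_zero (hf.contDiffAt (hU.mem_nhds hy))
      (eventually_of_mem (hU.mem_nhds hy) hsym)
  set M := fderiv ℝ f y₀
  have hDf : ∀ y ∈ U, fderiv ℝ f y = M := fun y hy =>
    hU.is_const_of_fderiv_eq_zero hconn.isPreconnected
      ((hf.fderiv_of_isOpen hU (m := 1) le_rfl).differentiableOn one_ne_zero) hD2 hy hy₀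
  obtain ⟨b, hb⟩ := hU.exists_eq_add_of_fderiv_eq hconn.isPreconnected
    (hf.differentiableOn two_ne_zero) M.differentiableOn fun y hy => by rw [hDf y hy, M.fderiv]
  refine ⟨LinearMap.toMatrix' M, ?_, b, fun y hy => ?_⟩
  · ext i j
    simp only [transpose_apply, Matrix.neg_apply, LinearMap.toMatrix'_apply,
      ContinuousLinearMap.coe_coe]
    linarith [hsym y₀ hy₀ j i]
  · rw [hb hy, LinearMap.toMatrix'_mulVec, ContinuousLinearMap.coe_coe]

/-- The kernel of the symmetric gradient consists exactly of rigid velocities: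
if `f` is `C²` on an open connected set `U ⊆ ℝ^d` (`d ≥ 2`) and its symmetric
gradient `ε(f) = (Df + Dfᵀ)/2` vanishes on `U`, then `f(y) = A y + b` on `U`
for some skew-symmetric matrix `A` and vector `b`. -/
theorem statement_0 {d : ℕ} (hd : 2 ≤ d) (U : Set (Fin d → ℝ))
    (hU : IsOpen U) (hconn : IsConnected U)
    (f : (Fin d → ℝ) → (Fin d → ℝ)) (hf : ContDiffOn ℝ 2 f U)
    (hsym : ∀ y ∈ U, ∀ i j : Fin d,
      fderiv ℝ f y (Pi.single i 1) j + fderiv ℝ f y (Pi.single j 1) i = 0) :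
    ∃ A : Matrix (Fin d) (Fin d) ℝ, Aᵀ = -A ∧
      ∃ b : Fin d → ℝ, ∀ y ∈ U, f y = A.mulVec y + b :=
  statement_0_general U hU hconn f hf hsym
end

section
/- Define η : ℝ × ℝ → ℝ by η(t,x) := cos(πt) sin(πx) and q : ℝ → ℝ by q(t) := −π cos(πt). Then η is a nontrivial solution of the one-dimensional overdetermined wave system on the interval Ω_S = (−1,1): (i) ∂²_t η(t,x) = ∂²_x η(t,x) for all (t,x) ∈ ℝ × ℝ; (ii) η(t,1) = η(t,−1) = 0 for all t (homogeneous Dirichlet condition); (iii) ∂_x η(t,1) = ∂_x η(t,−1) = q(t) for all t, i.e. the Neumann data is spatially constant on the boundary; and (iv) η is not identically zero (e.g. η(0,1/2) = 1). This exhibits a time-periodic pressure wave: a nonzero solution of the wave equation satisfying simultaneously homogeneous Dirichlet and scalar (spatially constant) Neumann boundary conditions. -/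
open Real

/-- The 1d pressure wave `η(t,x) = cos(πt) sin(πx)`. -/
noncomputable def eta (t x : ℝ) : ℝ := Real.cos (π * t) * Real.sin (π * x)

/-- The corresponding boundary pressure `q(t) = −π cos(πt)`. -/
noncomputable def qfun (t : ℝ) : ℝ := -π * Real.cos (π * t)

lemma deriv_cos_pi (c : ℝ) :
    deriv (fun s : ℝ => Real.cos (π * s) * c) = fun s => -π * Real.sin (π * s) * c := by
  funext s
  have h : HasDerivAt (fun s : ℝ => Real.cos (π * s) * c)
      (-π * Real.sin (π * s) * c) s := by
    have := ((Real.hasDerivAt_cos (π * s)).comp s ((hasDerivAt_id s).const_mul π)).mul_const c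
    simpa [mul_comm, mul_left_comm, mul_assoc] using this
  exact h.deriv

lemma deriv_sin_pi (c : ℝ) :
    deriv (fun z : ℝ => c * Real.sin (π * z)) = fun z => c * (π * Real.cos (π * z)) := by
  funext z
  have h : HasDerivAt (fun z : ℝ => c * Real.sin (π * z))
      (c * (π * Real.cos (π * z))) z := by
    have := (((Real.hasDerivAt_sin (π * z)).comp z ((hasDerivAt_id z).const_mul π))).const_mul c
    simpa [mul_comm, mul_left_comm, mul_assoc] using this
  exact h.deriv

lemma deriv_sin_pi' (c : ℝ) :
    deriv (fun s : ℝ => -π * Real.sin (π * s) * c) = fun s => -π * (π * Real.cos (π * s)) * c := by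
  funext s
  have h : HasDerivAt (fun s : ℝ => -π * Real.sin (π * s) * c)
      (-π * (π * Real.cos (π * s)) * c) s := by
    have := ((((Real.hasDerivAt_sin (π * s)).comp s
      ((hasDerivAt_id s).const_mul π))).const_mul (-π)).mul_const c
    simpa [mul_comm, mul_left_comm, mul_assoc] using this
  exact h.deriv

lemma deriv_cos_pi' (c : ℝ) :
    deriv (fun z : ℝ => c * (π * Real.cos (π * z))) = fun z => c * (π * (-π * Real.sin (π * z))) := by
  funext z
  have h : HasDerivAt (fun z : ℝ => c * (π * Real.cos (π * z)))
      (c * (π * (-π * Real.sin (π * z)))) z := by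
    have := (((Real.hasDerivAt_cos (π * z)).comp z
      ((hasDerivAt_id z).const_mul π)).const_mul π).const_mul c
    simpa [mul_comm, mul_left_comm, mul_assoc] using this
  exact h.deriv

/-- `η(t,x) = cos(πt) sin(πx)` is a nontrivial solution of the overdetermined
1d wave system on `Ω_S = (−1,1)`: it solves the wave equation `∂²_t η = ∂²_x η`,
vanishes at `x = ±1` (homogeneous Dirichlet condition), has spatially constant
Neumann data `∂_x η(t, ±1) = q(t) = −π cos(πt)`, and is not identically zero. -/
theorem statement_2 :
    (∀ t x : ℝ, iteratedDeriv 2 (fun s => eta s x) t = iteratedDeriv 2 (fun z => eta t z) x) ∧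
    (∀ t : ℝ, eta t 1 = 0 ∧ eta t (-1) = 0) ∧
    (∀ t : ℝ, deriv (fun z => eta t z) 1 = qfun t ∧ deriv (fun z => eta t z) (-1) = qfun t) ∧
    eta 0 (1 / 2) = 1 := by
  refine ⟨?_, ?_, ?_, ?_⟩
  · intro t x
    rw [iteratedDeriv_succ, iteratedDeriv_succ, iteratedDeriv_succ, iteratedDeriv_succ]
    simp only [iteratedDeriv_zero, eta]
    rw [deriv_cos_pi, deriv_sin_pi', deriv_sin_pi, deriv_cos_pi']
    ring
  · intro t
    refine ⟨by simp [eta, Real.sin_pi], ?_⟩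
    have h : Real.sin (π * (-1)) = 0 := by
      rw [mul_neg_one, Real.sin_neg, Real.sin_pi, neg_zero]
    simp [eta, h]
  · intro t
    constructor <;>
    · simp only [eta, qfun, deriv_sin_pi]
      simp [Real.cos_pi]
      ring
  · show Real.cos (π * 0) * Real.sin (π * (1 / 2)) = 1
    rw [mul_zero, Real.cos_zero, one_mul, show π * (1/2) = π/2 by ring,
      Real.sin_pi_div_two]
end

section
/- Let λ₁, λ₂ > 0 and k > 0. The vector field ψ_k(y) := (sin(k|y|)/(k²|y|³) − cos(k|y|)/(k|y|²)) y on ℝ³ ∖ {0} satisfies the Lamé eigenvalue equation −div(Σ(ψ_k))(y) = (2λ₁ + λ₂) k² ψ_k(y) for every y ∈ ℝ³ ∖ {0}; equivalently, λ₁ Δψ_k(y) + (λ₁ + λ₂) ∇(div ψ_k)(y) = −(2λ₁ + λ₂) k² ψ_k(y), where Δ acts componentwise and div(Σ(ψ_k)) denotes the row-wise divergence of the matrix field Σ(ψ_k). Thus ψ_k is an eigenfunction of the Lamé operator −div Σ with eigenvalue μ = (2λ₁ + λ₂) k². -/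
/-!
`ψ_k(y) = f(|y|) y` is a radial field. For any radial field whose profile satisfies
`f'(r) = r h(r)` one has `∂_m (f(|y|) y_i) = h y_i y_m + f δ_im`, hence
`Σ_ij = 2λ₁ h y_i y_j + (2λ₁ f + λ₂ (r² h + 3f)) δ_ij`, and the row-wise divergence of this
collapses to `(2λ₁ + λ₂)(r h' + 5h) y_i`. For the profile of `ψ_k` the radial equation
`r h' + 5h = -k² f` is an identity between elementary functions.
-/

open Real

/-- The radial vector field `ψ_k(y) = (sin(k|y|)/(k²|y|³) − cos(k|y|)/(k|y|²)) y`
on `ℝ³ ∖ {0}`. -/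
noncomputable def psi (k : ℝ) (y : EuclideanSpace ℝ (Fin 3)) : EuclideanSpace ℝ (Fin 3) :=
  (Real.sin (k * ‖y‖) / (k ^ 2 * ‖y‖ ^ 3) - Real.cos (k * ‖y‖) / (k * ‖y‖ ^ 2)) • y

/-- The `i`-th partial derivative of a scalar function on `ℝ³`. -/
noncomputable def pd (i : Fin 3) (g : EuclideanSpace ℝ (Fin 3) → ℝ)
    (y : EuclideanSpace ℝ (Fin 3)) : ℝ :=
  fderiv ℝ g y (EuclideanSpace.single i 1)

/-- The linear–elastic stress tensor
`Σ(v) = 2λ₁ ε(v) + λ₂ div(v) Id`, with `ε(v) = (Dv + Dvᵀ)/2`, written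
entrywise: `Σ(v)_{ij} = λ₁ (∂_j v_i + ∂_i v_j) + λ₂ (div v) δ_{ij}`. -/
noncomputable def stress (l1 l2 : ℝ) (v : EuclideanSpace ℝ (Fin 3) → EuclideanSpace ℝ (Fin 3))
    (y : EuclideanSpace ℝ (Fin 3)) (i j : Fin 3) : ℝ :=
  l1 * (pd j (fun z => v z i) y + pd i (fun z => v z j) y) +
    l2 * (∑ m : Fin 3, pd m (fun z => v z m) y) * (if i = j then (1 : ℝ) else 0)

open Filter Topology

local notation "E3" => EuclideanSpace ℝ (Fin 3)

theorem hasFDerivAt_norm {F : Type*} [NormedAddCommGroup F] [InnerProductSpace ℝ F] {x : F}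
    (hx : x ≠ 0) : HasFDerivAt (‖·‖) (‖x‖⁻¹ • innerSL ℝ x) x := by
  have hsq : HasFDerivAt (fun z : F => √(‖z‖ ^ 2))
      ((1 / (2 * √(‖x‖ ^ 2))) • 2 • innerSL ℝ x) x :=
    (hasStrictFDerivAt_norm_sq x).hasFDerivAt.sqrt (by positivity)
  simp only [sqrt_sq (norm_nonneg _)] at hsq
  refine hsq.congr_fderiv ?_
  ext v
  simp only [one_div, mul_inv_rev, smul_apply, coe_innerSL_apply, nsmul_eq_mul, Nat.cast_ofNat,
    smul_eq_mul]
  field_simp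

theorem HasDerivAt.hasFDerivAt_comp_norm {F : Type*} [NormedAddCommGroup F]
    [InnerProductSpace ℝ F] {x : F} {φ : ℝ → ℝ} {d : ℝ} (hφ : HasDerivAt φ d ‖x‖)
    (hx : x ≠ 0) :
    HasFDerivAt (fun z => φ ‖z‖) ((d / ‖x‖) • innerSL ℝ x) x := by
  refine (hφ.comp_hasFDerivAt x (hasFDerivAt_norm hx)).congr_fderiv ?_
  rw [smul_smul, div_eq_mul_inv]

section PartialDerivative

variable {g g₁ g₂ : E3 → ℝ} {y : E3}

theorem HasFDerivAt.pd_eq {g' : E3 →L[ℝ] ℝ} (h : HasFDerivAt g g' y) (i : Fin 3) :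
    pd i g y = g' (EuclideanSpace.single i 1) := by
  rw [pd, h.fderiv]

theorem pd_congr (h : g₁ =ᶠ[𝓝 y] g₂) (i : Fin 3) : pd i g₁ y = pd i g₂ y := by
  rw [pd, pd, h.fderiv_eq]

end PartialDerivative

section RadialField

variable {f h h' : ℝ → ℝ} {l1 l2 : ℝ} {y : E3}

theorem pd_smul_radial (hf : ∀ r > 0, HasDerivAt f (r * h r) r) (hy : y ≠ 0) (i m : Fin 3) :
    pd m (fun z => (f ‖z‖ • z) i) y =
      h ‖y‖ * (y i * y m) + f ‖y‖ * (if m = i then 1 else 0) := by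
  have hr : 0 < ‖y‖ := norm_pos_iff.mpr hy
  have hfy := (hf _ hr).hasFDerivAt_comp_norm hy
  refine ((hfy.fun_mul (PiLp.hasFDerivAt_apply 2 y i)).pd_eq m).trans ?_
  simp only [add_apply, smul_apply, PiLp.proj_apply, PiLp.single_apply, smul_eq_mul, mul_ite,
    mul_one, mul_zero, coe_innerSL_apply, EuclideanSpace.inner_single_right, ringHom_apply, one_mul,
    eq_comm]
  field_simp
  ring

theorem stress_smul_radial (hf : ∀ r > 0, HasDerivAt f (r * h r) r) (hy : y ≠ 0) (i j : Fin 3) :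
    stress l1 l2 (fun z => f ‖z‖ • z) y i j =
      2 * l1 * h ‖y‖ * (y i * y j) +
        (2 * l1 * f ‖y‖ + l2 * (‖y‖ ^ 2 * h ‖y‖ + 3 * f ‖y‖)) *
          (if i = j then 1 else 0) := by
  simp only [stress, pd_smul_radial hf hy]
  simp only [eq_comm, mul_ite, mul_one, mul_zero, ← sq, Finset.sum_add_distrib, ← Finset.mul_sum,
    ↓reduceIte, Finset.sum_const, Finset.card_univ, Fintype.card_fin, nsmul_eq_mul, Nat.cast_ofNat,
    EuclideanSpace.norm_sq_eq, norm_eq_abs, sq_abs]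
  split_ifs <;> ring

theorem pd_stress_smul_radial (hf : ∀ r > 0, HasDerivAt f (r * h r) r)
    (hh : ∀ r > 0, HasDerivAt h (h' r) r) (hy : y ≠ 0) (i j : Fin 3) :
    pd j (fun z => stress l1 l2 (fun w => f ‖w‖ • w) z i j) y =
      2 * l1 * (h' ‖y‖ / ‖y‖ * y j ^ 2 + h ‖y‖) * y i +
        if i = j then (4 * l1 * h ‖y‖ + l2 * (‖y‖ * h' ‖y‖ + 5 * h ‖y‖)) * y i
        else 0 := by
  have hr : 0 < ‖y‖ := norm_pos_iff.mpr hy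
  set A : ℝ → ℝ := fun s => 2 * l1 * f s + l2 * (s ^ 2 * h s + 3 * f s)
  have hA :
      HasDerivAt A (‖y‖ * (2 * l1 * h ‖y‖ + l2 * (‖y‖ * h' ‖y‖ + 5 * h ‖y‖))) ‖y‖ := by
    refine (((hf _ hr).const_mul (2 * l1)).add ((((hasDerivAt_pow 2 _).mul (hh _ hr)).add
      ((hf _ hr).const_mul 3)).const_mul l2)).congr_deriv ?_
    push_cast
    ring
  have hlocal : (fun z => stress l1 l2 (fun w => f ‖w‖ • w) z i j) =ᶠ[𝓝 y]
      fun z => 2 * l1 * h ‖z‖ * (z i * z j) + A ‖z‖ * (if i = j then 1 else 0) :=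
    (eventually_ne_nhds hy).mono fun z hz => stress_smul_radial hf hz i j
  have hhy := ((hh _ hr).hasFDerivAt_comp_norm hy).const_mul (2 * l1)
  have hAy := hA.hasFDerivAt_comp_norm hy
  rw [pd_congr hlocal, ((hhy.fun_mul ((PiLp.hasFDerivAt_apply 2 y i).fun_mul
    (PiLp.hasFDerivAt_apply 2 y j))).fun_add (hAy.mul_const _)).pd_eq]
  split_ifs with hij
  · subst hij
    simp only [smul_add, one_smul, add_apply, smul_apply, PiLp.proj_apply, PiLp.single_eq_same,
      smul_eq_mul, mul_one, coe_innerSL_apply, EuclideanSpace.inner_single_right, ringHom_apply,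
      one_mul]
    field_simp
    ring
  · simp only [smul_add, zero_smul, add_zero, add_apply, smul_apply, PiLp.proj_apply,
      PiLp.single_eq_same, smul_eq_mul, mul_one, ne_eq, hij, not_false_eq_true,
      PiLp.single_eq_of_ne, mul_zero, coe_innerSL_apply, EuclideanSpace.inner_single_right,
      ringHom_apply, one_mul]
    field_simp
    ring

theorem sum_pd_stress_smul_radial (hf : ∀ r > 0, HasDerivAt f (r * h r) r)
    (hh : ∀ r > 0, HasDerivAt h (h' r) r) (hy : y ≠ 0) (i : Fin 3) :
    ∑ j, pd j (fun z => stress l1 l2 (fun w => f ‖w‖ • w) z i j) y =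
      (2 * l1 + l2) * (‖y‖ * h' ‖y‖ + 5 * h ‖y‖) * y i := by
  have hsq : ∑ j, y j ^ 2 = ‖y‖ ^ 2 := by simp [EuclideanSpace.norm_sq_eq]
  simp only [pd_stress_smul_radial hf hh hy, Finset.sum_add_distrib, Finset.sum_ite_eq,
    Finset.mem_univ, if_true, ← Finset.sum_mul, ← Finset.mul_sum, hsq, Finset.sum_const,
    Finset.card_univ, Fintype.card_fin, nsmul_eq_mul, Nat.cast_ofNat]
  field_simp
  ring

end RadialField

section Profile

variable {k r : ℝ}

noncomputable def psiProfile (k r : ℝ) : ℝ :=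
  sin (k * r) / (k ^ 2 * r ^ 3) - cos (k * r) / (k * r ^ 2)

noncomputable def psiSlope (k r : ℝ) : ℝ :=
  3 * cos (k * r) / (k * r ^ 4) - 3 * sin (k * r) / (k ^ 2 * r ^ 5) + sin (k * r) / r ^ 3

noncomputable def psiSlopeDeriv (k r : ℝ) : ℝ :=
  k * cos (k * r) / r ^ 3 - 6 * sin (k * r) / r ^ 4 - 15 * cos (k * r) / (k * r ^ 5)
    + 15 * sin (k * r) / (k ^ 2 * r ^ 6)

theorem psi_eq_smul_psiProfile (k : ℝ) : psi k = fun y => psiProfile k ‖y‖ • y := rfl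

theorem hasDerivAt_psiProfile (hk : k ≠ 0) (hr : r ≠ 0) :
    HasDerivAt (psiProfile k) (r * psiSlope k r) r := by
  have hkr := (hasDerivAt_id' r).const_mul k
  refine ((hkr.sin.div ((hasDerivAt_pow 3 r).const_mul (k ^ 2)) (by positivity)).sub
    (hkr.cos.div ((hasDerivAt_pow 2 r).const_mul k) (by positivity))).congr_deriv ?_
  unfold psiSlope
  field_simp
  ring

theorem hasDerivAt_psiSlope (hk : k ≠ 0) (hr : r ≠ 0) :
    HasDerivAt (psiSlope k) (psiSlopeDeriv k r) r := by
  have hkr := (hasDerivAt_id' r).const_mul k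
  refine (((hkr.cos.const_mul 3).div ((hasDerivAt_pow 4 r).const_mul k) (by positivity)).sub
    ((hkr.sin.const_mul 3).div ((hasDerivAt_pow 5 r).const_mul (k ^ 2)) (by positivity))).add
    (hkr.sin.div (hasDerivAt_pow 3 r) (by positivity)) |>.congr_deriv ?_
  unfold psiSlopeDeriv
  field_simp
  ring

theorem psiSlope_ode (hk : k ≠ 0) (hr : r ≠ 0) :
    r * psiSlopeDeriv k r + 5 * psiSlope k r = -k ^ 2 * psiProfile k r := by
  unfold psiProfile psiSlope psiSlopeDeriv
  field_simp
  ring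

end Profile

theorem statement_3_general (l1 l2 k : ℝ) (hk : 0 < k) :
    ∀ y : EuclideanSpace ℝ (Fin 3), y ≠ 0 → ∀ i : Fin 3,
      -(∑ j : Fin 3, pd j (fun z => stress l1 l2 (psi k) z i j) y) =
        (2 * l1 + l2) * k ^ 2 * psi k y i := by
  intro y hy i
  rw [psi_eq_smul_psiProfile,
    sum_pd_stress_smul_radial (fun r hr => hasDerivAt_psiProfile hk.ne' hr.ne')
      (fun r hr => hasDerivAt_psiSlope hk.ne' hr.ne') hy,
    psiSlope_ode hk.ne' (norm_ne_zero_iff.mpr hy)]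
  change -(_ * _ * y i) = _ * _ * (psiProfile k ‖y‖ * y i)
  ring

/-- `ψ_k` is an eigenfunction of the Lamé operator `−div Σ` on `ℝ³ ∖ {0}` with
eigenvalue `μ = (2λ₁ + λ₂) k²`: for every `y ≠ 0`,
`−div(Σ(ψ_k))(y) = (2λ₁ + λ₂) k² ψ_k(y)`, where `div(Σ(ψ_k))` is the row-wise
divergence of the matrix field `Σ(ψ_k)`. -/
theorem statement_3 (l1 l2 k : ℝ) (hl1 : 0 < l1) (hl2 : 0 < l2) (hk : 0 < k) :
    ∀ y : EuclideanSpace ℝ (Fin 3), y ≠ 0 → ∀ i : Fin 3,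
      -(∑ j : Fin 3, pd j (fun z => stress l1 l2 (psi k) z i j) y) =
        (2 * l1 + l2) * k ^ 2 * psi k y i :=
  statement_3_general l1 l2 k hk
end

section
/- Let ν > 0, C̃ > 0 and E₀ ≥ 0. Let K : [0,∞) → [0,∞) be continuous with 4ν − C̃ (E₀ + K(0))^{1/2} > 0, and let g : [0,∞) → [0,∞) be locally integrable. Assume that for all t ≥ 0, K(t) + ∫₀ᵗ (4ν − C̃ (E₀ + K(s))^{1/2}) g(s) ds ≤ K(0). Then K(t) ≤ K(0) for all t ≥ 0, and ∫₀ᵗ g(s) ds ≤ K(0) / (4ν − C̃ (E₀ + K(0))^{1/2}) for every t ≥ 0; in particular ∫₀^∞ g(s) ds ≤ K(0) / (4ν − C̃ (E₀ + K(0))^{1/2}). -/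
open MeasureTheory

/-- Continuity/bootstrap argument for the higher-order energy `K`: if `K` is
continuous and nonnegative on `[0,∞)`, `g ≥ 0` is locally integrable,
`4ν − C̃ √(E₀ + K(0)) > 0`, and
`K(t) + ∫₀ᵗ (4ν − C̃ √(E₀ + K(s))) g(s) ds ≤ K(0)` for all `t ≥ 0`, then
`K(t) ≤ K(0)` for all `t ≥ 0` and `∫₀ᵗ g ≤ K(0)/(4ν − C̃ √(E₀ + K(0)))`; in
particular `g` is integrable on `[0,∞)` with the same bound on its integral. -/
theorem statement_10 (ν C E₀ : ℝ) (hν : 0 < ν) (hC : 0 < C) (hE₀ : 0 ≤ E₀)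
    (K g : ℝ → ℝ)
    (hKcont : ContinuousOn K (Set.Ici 0))
    (hKnn : ∀ t, 0 ≤ t → 0 ≤ K t)
    (hgnn : ∀ t, 0 ≤ t → 0 ≤ g t)
    (hgint : ∀ t, 0 ≤ t → IntervalIntegrable g volume 0 t)
    (hpos : 0 < 4 * ν - C * Real.sqrt (E₀ + K 0))
    (hineq : ∀ t, 0 ≤ t →
      K t + ∫ s in (0 : ℝ)..t, (4 * ν - C * Real.sqrt (E₀ + K s)) * g s ≤ K 0) :
    (∀ t, 0 ≤ t → K t ≤ K 0) ∧
    (∀ t, 0 ≤ t → (∫ s in (0 : ℝ)..t, g s) ≤ K 0 / (4 * ν - C * Real.sqrt (E₀ + K 0))) ∧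
    IntegrableOn g (Set.Ici 0) ∧
    (∫ s in Set.Ici (0 : ℝ), g s) ≤ K 0 / (4 * ν - C * Real.sqrt (E₀ + K 0)) := by
  set c : ℝ := 4 * ν - C * Real.sqrt (E₀ + K 0) with hc
  set φ : ℝ → ℝ := fun s => 4 * ν - C * Real.sqrt (E₀ + K s) with hφ
  have hφcont : ContinuousOn φ (Set.Ici 0) :=
    continuousOn_const.sub (continuousOn_const.mul
      (Real.continuous_sqrt.comp_continuousOn (continuousOn_const.add hKcont)))
  -- if K s ≤ K 0 then c ≤ φ s
  have hcle : ∀ s, K s ≤ K 0 → c ≤ φ s := by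
    intro s hs
    have : Real.sqrt (E₀ + K s) ≤ Real.sqrt (E₀ + K 0) :=
      Real.sqrt_le_sqrt (by linarith)
    simp only [hφ, hc]
    nlinarith
  -- Part 1: K t ≤ K 0 for all t ≥ 0
  have hK : ∀ t, 0 ≤ t → K t ≤ K 0 := by
    by_contra hcon
    push_neg at hcon
    obtain ⟨t', ht'0, ht'⟩ := hcon
    set bad : Set ℝ := {t | 0 ≤ t ∧ K 0 < K t} with hbad
    have hbadne : bad.Nonempty := ⟨t', ht'0, ht'⟩
    have hbdd : BddBelow bad := ⟨0, fun x hx => hx.1⟩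
    set t₀ := sInf bad with ht₀
    have ht₀0 : 0 ≤ t₀ := le_csInf hbadne fun x hx => hx.1
    have hgood : ∀ s, 0 ≤ s → s < t₀ → K s ≤ K 0 := by
      intro s hs hst
      by_contra h
      exact absurd (csInf_le hbdd ⟨hs, lt_of_not_ge h⟩) (not_le.mpr hst)
    have hKt₀ : K t₀ ≤ K 0 := by
      rcases eq_or_lt_of_le ht₀0 with h0 | h0
      · simp [← h0]
      · have hcw : ContinuousWithinAt K (Set.Ico 0 t₀) t₀ :=
          ((hKcont t₀ ht₀0).mono (Set.Ico_subset_Ici_self))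
        have hne : (nhdsWithin t₀ (Set.Ico 0 t₀)).NeBot := by
          rw [mem_closure_iff_nhdsWithin_neBot.symm, closure_Ico h0.ne]
          exact Set.right_mem_Icc.mpr ht₀0
        refine le_of_tendsto hcw ?_
        filter_upwards [eventually_mem_nhdsWithin] with s hs
        exact hgood s hs.1 hs.2
    have hφt₀ : 0 < φ t₀ := lt_of_lt_of_le hpos (hcle t₀ hKt₀)
    -- eventually φ > 0 near t₀ within Ici 0
    have hEv : ∀ᶠ s in nhdsWithin t₀ (Set.Ici 0), 0 < φ s :=
      (hφcont t₀ ht₀0).eventually (eventually_gt_nhds hφt₀)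
    obtain ⟨δ, hδ, hδpos⟩ := Metric.mem_nhdsWithin_iff.mp hEv
    obtain ⟨t₁, ht₁bad, ht₁lt⟩ := exists_lt_of_csInf_lt hbadne (show sInf bad < t₀ + δ by linarith)
    have ht₀t₁ : t₀ ≤ t₁ := csInf_le hbdd ht₁bad
    have ht₁0 : 0 ≤ t₁ := ht₁bad.1
    have hφnn : ∀ s ∈ Set.Icc (0:ℝ) t₁, 0 ≤ φ s * g s := by
      intro s hs
      refine mul_nonneg ?_ (hgnn s hs.1)
      rcases lt_or_ge s t₀ with h | h
      · exact le_trans hpos.le (hcle s (hgood s hs.1 h))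
      · rcases eq_or_lt_of_le h with h' | h'
        · exact le_trans hpos.le (hcle s (h' ▸ hKt₀))
        · refine le_of_lt (hδpos ⟨?_, hs.1⟩)
          rw [Metric.mem_ball, Real.dist_eq, abs_of_nonneg (by linarith)]
          linarith [hs.2]
    have hintnn : 0 ≤ ∫ s in (0:ℝ)..t₁, φ s * g s :=
      intervalIntegral.integral_nonneg ht₁0 hφnn
    have := hineq t₁ ht₁0
    have : K t₁ ≤ K 0 := by
      simp only [hφ] at hintnn
      linarith
    exact absurd this (not_le.mpr ht₁bad.2)
  -- Part 2: bound on interval integrals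
  have huIcc : ∀ t : ℝ, 0 ≤ t → Set.uIcc (0:ℝ) t ⊆ Set.Ici 0 := by
    intro t ht
    rw [Set.uIcc_of_le ht]
    exact fun x hx => hx.1
  have hInt : ∀ t, 0 ≤ t → (∫ s in (0:ℝ)..t, g s) ≤ K 0 / c := by
    intro t ht
    have hφint : IntervalIntegrable (fun s => φ s * g s) volume 0 t :=
      (hgint t ht).continuousOn_mul (hφcont.mono (huIcc t ht))
    have hcg : IntervalIntegrable (fun s => c * g s) volume 0 t :=
      (hgint t ht).const_mul c
    have hmono : (∫ s in (0:ℝ)..t, c * g s) ≤ ∫ s in (0:ℝ)..t, φ s * g s := by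
      refine intervalIntegral.integral_mono_on ht hcg hφint ?_
      intro s hs
      exact mul_le_mul_of_nonneg_right (hcle s (hK s hs.1)) (hgnn s hs.1)
    rw [intervalIntegral.integral_const_mul] at hmono
    have h1 := hineq t ht
    have h2 : (0:ℝ) ≤ K t := hKnn t ht
    have : c * ∫ s in (0:ℝ)..t, g s ≤ K 0 := by
      simp only [hφ] at hmono
      linarith
    rw [le_div_iff₀ hpos]
    linarith
  refine ⟨hK, hInt, ?_⟩
  -- Part 3: integrability on Ici 0 and bound
  have hgintIoi : IntegrableOn g (Set.Ioi 0) := by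
    refine integrableOn_Ioi_of_intervalIntegral_norm_bounded (K 0 / c) 0
      (fun n : ℕ => ?_) tendsto_natCast_atTop_atTop ?_
    · exact (intervalIntegrable_iff_integrableOn_Ioc_of_le (Nat.cast_nonneg n)).mp
        (hgint n (Nat.cast_nonneg n))
    · filter_upwards with n
      have hn : (0:ℝ) ≤ (n:ℝ) := Nat.cast_nonneg n
      have : (∫ x in (0:ℝ)..(n:ℝ), ‖g x‖) = ∫ x in (0:ℝ)..(n:ℝ), g x := by
        refine intervalIntegral.integral_congr ?_
        intro x hx
        exact Real.norm_of_nonneg (hgnn x ((huIcc _ hn) hx))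
      rw [this]
      exact hInt n hn
  have hgintIci : IntegrableOn g (Set.Ici 0) := by
    rwa [integrableOn_Ici_iff_integrableOn_Ioi]
  refine ⟨hgintIci, ?_⟩
  rw [MeasureTheory.integral_Ici_eq_integral_Ioi]
  have htend : Filter.Tendsto (fun n : ℕ => ∫ x in (0:ℝ)..(n:ℝ), g x) Filter.atTop
      (nhds (∫ x in Set.Ioi (0:ℝ), g x)) :=
    intervalIntegral_tendsto_integral_Ioi 0 hgintIoi tendsto_natCast_atTop_atTop
  refine le_of_tendsto htend ?_
  filter_upwards with n
  exact hInt n (Nat.cast_nonneg n)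
end

section
/- Let ω > 0 and c > 0, and let φ : ℝ → ℝ be continuous and (2π/ω)-periodic. Assume that for every t₀ ∈ (0, c) there exist real numbers a(t₀), b(t₀) such that ∫_t^{t+t₀} φ(s) ds = a(t₀) sin(ωt) + b(t₀) cos(ωt) for all t ∈ ℝ. Then there exist real numbers ã, b̃ such that φ(t) = ã sin(ωt) + b̃ cos(ωt) for all t ∈ ℝ; i.e., φ is a pure first-harmonic sinusoid of angular frequency ω (in particular its mean over a period vanishes and all higher Fourier coefficients vanish). -/
/-- If `φ : ℝ → ℝ` is continuous and `(2π/ω)`-periodic and every window integral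
`t ↦ ∫_t^{t+t₀} φ(s) ds` (for `t₀ ∈ (0,c)`) is of the form
`a(t₀) sin(ωt) + b(t₀) cos(ωt)`, then `φ` itself is a pure first-harmonic
sinusoid: `φ(t) = ã sin(ωt) + b̃ cos(ωt)` for some `ã, b̃ ∈ ℝ`. -/
theorem statement_14 (ω c : ℝ) (hω : 0 < ω) (hc : 0 < c) (φ : ℝ → ℝ)
    (hφ : Continuous φ) (hper : Function.Periodic φ (2 * Real.pi / ω))
    (h : ∀ t₀ : ℝ, 0 < t₀ → t₀ < c → ∃ a b : ℝ, ∀ t : ℝ,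
      (∫ s in t..(t + t₀), φ s) = a * Real.sin (ω * t) + b * Real.cos (ω * t)) :
    ∃ a' b' : ℝ, ∀ t : ℝ, φ t = a' * Real.sin (ω * t) + b' * Real.cos (ω * t) := by
  set g : ℝ → ℝ := fun x => ∫ s in (0:ℝ)..x, φ s with hg_def
  have hg : ∀ x : ℝ, HasDerivAt g (φ x) x := fun x =>
    intervalIntegral.integral_hasDerivAt_right (hφ.intervalIntegrable 0 x)
      (hφ.stronglyMeasurableAtFilter MeasureTheory.volume (nhds x)) hφ.continuousAt
  have hsplit : ∀ t t₀ : ℝ, (∫ s in t..(t + t₀), φ s) = g (t + t₀) - g t := by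
    intro t t₀
    have := intervalIntegral.integral_add_adjacent_intervals
      (hφ.intervalIntegrable (μ := MeasureTheory.volume) 0 t) (hφ.intervalIntegrable t (t + t₀))
    simp only [hg_def]
    linarith [this]
  set p : ℝ := Real.pi / (2 * ω) with hp_def
  have hsinp : Real.sin (ω * p) = 1 := by
    rw [hp_def]
    rw [show ω * (Real.pi / (2 * ω)) = Real.pi / 2 by field_simp]
    exact Real.sin_pi_div_two
  have hcosp : Real.cos (ω * p) = 0 := by
    rw [hp_def]
    rw [show ω * (Real.pi / (2 * ω)) = Real.pi / 2 by field_simp]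
    exact Real.cos_pi_div_two
  -- key identity: for t₀ ∈ (0,c), for all t,
  -- g (t+t₀) - g t = (g (p+t₀) - g p) sin(ωt) + g t₀ cos(ωt)
  have key : ∀ t₀ : ℝ, 0 < t₀ → t₀ < c → ∀ t : ℝ,
      g (t + t₀) - g t = (g (p + t₀) - g p) * Real.sin (ω * t)
        + g t₀ * Real.cos (ω * t) := by
    intro t₀ h0 h1 t
    obtain ⟨a, b, hab⟩ := h t₀ h0 h1
    have hb : b = g t₀ := by
      have := hab 0
      rw [hsplit] at this
      simp [hg_def] at this
      simpa [mul_comm] using this.symm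
    have ha : a = g (p + t₀) - g p := by
      have := hab p
      rw [hsplit, hsinp, hcosp] at this
      simpa using this.symm
    have := hab t
    rw [hsplit] at this
    rw [this, ha, hb]
  -- differentiate both sides in t₀ at t₀ = c/2
  have hc2 : (0:ℝ) < c / 2 := by linarith
  have hc2' : c / 2 < c := by linarith
  have main : ∀ t : ℝ, φ (t + c / 2) = φ (p + c / 2) * Real.sin (ω * t)
      + φ (c / 2) * Real.cos (ω * t) := by
    intro t
    have hL : HasDerivAt (fun t₀ => g (t + t₀) - g t) (φ (t + c / 2)) (c / 2) := by
      have := ((hg (t + c / 2)).comp (c / 2)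
        ((hasDerivAt_id (c / 2)).const_add t))
      simpa using this.sub_const (g t)
    have hR : HasDerivAt
        (fun t₀ => (g (p + t₀) - g p) * Real.sin (ω * t) + g t₀ * Real.cos (ω * t))
        (φ (p + c / 2) * Real.sin (ω * t) + φ (c / 2) * Real.cos (ω * t)) (c / 2) := by
      have h1 : HasDerivAt (fun t₀ => g (p + t₀) - g p) (φ (p + c / 2)) (c / 2) := by
        have := ((hg (p + c / 2)).comp (c / 2)
          ((hasDerivAt_id (c / 2)).const_add p))
        simpa using this.sub_const (g p)
      exact (h1.mul_const _).add ((hg (c / 2)).mul_const _)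
    have heq : (fun t₀ => g (t + t₀) - g t) =ᶠ[nhds (c / 2)]
        (fun t₀ => (g (p + t₀) - g p) * Real.sin (ω * t) + g t₀ * Real.cos (ω * t)) := by
      filter_upwards [Ioo_mem_nhds hc2 hc2'] with x hx
      exact key x hx.1 hx.2 t
    have hL' : HasDerivAt (fun t₀ => g (t + t₀) - g t)
        (φ (p + c / 2) * Real.sin (ω * t) + φ (c / 2) * Real.cos (ω * t)) (c / 2) :=
      hR.congr_of_eventuallyEq heq
    exact hL.unique hL'
  set α := φ (p + c / 2)
  set β := φ (c / 2)
  set θ := ω * (c / 2) with hθ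
  refine ⟨α * Real.cos θ + β * Real.sin θ, -α * Real.sin θ + β * Real.cos θ, fun u => ?_⟩
  have := main (u - c / 2)
  rw [show u - c / 2 + c / 2 = u by ring] at this
  rw [this, show ω * (u - c / 2) = ω * u - θ by rw [hθ]; ring,
    Real.sin_sub, Real.cos_sub]
  ring
end

section
/- Let ω > 0 and let a, b ∈ ℝ with (a, b) ≠ (0, 0); set f(t) := a sin(ωt) + b cos(ωt). Let (t_n) be a sequence of real numbers such that for every ε > 0 there exists N with sup_{t ∈ ℝ} |f(t + t_m − t_n) − f(t)| < ε for all m, n ≥ N. Then the sequence (exp(i ω t_n)) converges in ℂ; equivalently, there exists θ ∈ ℝ such that the distance from ω t_n − θ to 2πℤ tends to 0, i.e. the phases t_n converge modulo the period 2π/ω. -/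
/-!
Writing `a sin x + b cos x = Re (c e^{ix})` with `c = b - a i`, the shift by `τ` changes the
sinusoid by `Re (c (e^{iωτ} - 1) e^{iωs})`, whose supremum over `s` is `‖c‖ ‖e^{iωτ} - 1‖`.
The hypothesis therefore makes `e^{iωt_n}` a Cauchy sequence, since `c ≠ 0`.
-/

open Filter Complex

lemma sin_cos_eq_re_mul_exp (a b x : ℝ) :
    a * Real.sin x + b * Real.cos x = (((b : ℂ) - a * I) * exp (x * I)).re := by
  rw [exp_mul_I, ← ofReal_cos, ← ofReal_sin]
  simp only [mul_re, mul_im, sub_re, sub_im, add_re, add_im, ofReal_re, ofReal_im, I_re, I_im]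
  ring

lemma norm_lt_of_forall_re_mul_exp_lt {z : ℂ} {ε : ℝ} (h : ∀ x : ℝ, (z * exp (x * I)).re < ε) :
    ‖z‖ < ε := by
  have hrot : z * exp ((-arg z : ℝ) * I) = ‖z‖ :=
    calc z * exp ((-arg z : ℝ) * I) = ‖z‖ * exp (arg z * I) * exp ((-arg z : ℝ) * I) := by
          rw [norm_mul_exp_arg_mul_I]
      _ = ‖z‖ := by rw [mul_assoc, ← exp_add, ofReal_neg, neg_mul, add_neg_cancel, exp_zero,
          mul_one]
  simpa only [hrot, ofReal_re] using h (-arg z)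

lemma sin_cos_shift_sub (a b ω s τ : ℝ) :
    a * Real.sin (ω * (s + τ)) + b * Real.cos (ω * (s + τ)) -
        (a * Real.sin (ω * s) + b * Real.cos (ω * s)) =
      (((b : ℂ) - a * I) * (exp ((ω * τ : ℝ) * I) - 1) * exp ((ω * s : ℝ) * I)).re := by
  rw [sin_cos_eq_re_mul_exp, sin_cos_eq_re_mul_exp, ← sub_re, mul_add, ofReal_add, add_mul,
    exp_add]
  ring_nf

lemma norm_mul_norm_exp_sub_one_lt {a b ω τ ε : ℝ} (hω : ω ≠ 0)
    (h : ∀ s : ℝ, |a * Real.sin (ω * (s + τ)) + b * Real.cos (ω * (s + τ)) -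
        (a * Real.sin (ω * s) + b * Real.cos (ω * s))| < ε) :
    ‖(b : ℂ) - a * I‖ * ‖exp ((ω * τ : ℝ) * I) - 1‖ < ε := by
  rw [← norm_mul]
  refine norm_lt_of_forall_re_mul_exp_lt fun x => ?_
  have hs := h (x / ω)
  rw [sin_cos_shift_sub, mul_div_cancel₀ x hω] at hs
  exact (le_abs_self _).trans_lt hs

lemma dist_exp_mul_I (x y : ℝ) :
    dist (exp (x * I)) (exp (y * I)) = ‖exp ((x - y : ℝ) * I) - 1‖ := by
  have hfactor : exp (x * I) - exp (y * I) = exp (y * I) * (exp ((x - y : ℝ) * I) - 1) := by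
    rw [mul_sub, mul_one, ← exp_add, ofReal_sub]
    ring_nf
  rw [dist_eq, hfactor, norm_mul, norm_exp_ofReal_mul_I, one_mul]

lemma ofReal_sub_ofReal_mul_I_ne_zero {a b : ℝ} (hab : (a, b) ≠ (0, 0)) :
    (b : ℂ) - a * I ≠ 0 := by
  contrapose! hab
  have hre := congrArg re hab
  have him := congrArg im hab
  simp only [sub_re, sub_im, mul_re, mul_im, ofReal_re, ofReal_im, I_re, I_im, zero_re,
    zero_im] at hre him
  ext <;> dsimp <;> linarith

/-- Phase convergence: let `f(t) = a sin(ωt) + b cos(ωt)` be a nonzero sinusoid of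
angular frequency `ω > 0`, and let `(t_n)` be a sequence such that the shifts
`t_m − t_n` asymptotically almost leave `f` invariant, uniformly in `t`. Then
`exp(i ω t_n)` converges in `ℂ`, i.e. the phases `t_n` converge modulo the
period `2π/ω`. -/
theorem statement_16 (ω : ℝ) (hω : 0 < ω) (a b : ℝ) (hab : (a, b) ≠ (0, 0))
    (t : ℕ → ℝ)
    (h : ∀ ε : ℝ, 0 < ε → ∃ N : ℕ, ∀ m n : ℕ, N ≤ m → N ≤ n → ∀ s : ℝ,
      |a * Real.sin (ω * (s + t m - t n)) + b * Real.cos (ω * (s + t m - t n)) -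
        (a * Real.sin (ω * s) + b * Real.cos (ω * s))| < ε) :
    ∃ z : ℂ, Tendsto (fun n => Complex.exp (Complex.I * ((ω * t n : ℝ) : ℂ)))
      atTop (nhds z) := by
  have hc : 0 < ‖(b : ℂ) - a * I‖ := norm_pos_iff.mpr (ofReal_sub_ofReal_mul_I_ne_zero hab)
  refine cauchySeq_tendsto_of_complete (Metric.cauchySeq_iff.mpr fun ε hε => ?_)
  obtain ⟨N, hN⟩ := h (ε * ‖(b : ℂ) - a * I‖) (by positivity)
  refine ⟨N, fun m hm n hn => ?_⟩
  have hshift := norm_mul_norm_exp_sub_one_lt hω.ne' fun s => by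
    simpa only [add_sub_assoc] using hN m n hm hn s
  simp only [mul_comm I, dist_exp_mul_I, ← mul_sub]
  exact lt_of_mul_lt_mul_left (by linarith) hc.le
end
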